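/- arXiv:2408.14459 — 8 statements merged into one kernel-verified Lean document; each statement's English description precedes it below -/
import Mathlib

section
/- For 1 < p < ∞ and a p-summable sequence (x_n) in a Banach space E, the p-convex hull p-conv(x_n) is a relatively compact subset of E. -/
open scoped BigOperators Classical

noncomputable section

variable {E : Type*} [NormedAddCommGroup E] [NormedSpace ℂ E]

/-- Coefficient sequences: the closed unit ball of `ℓ_{p*}` (where `p* = p/(p-1)`)
for `p > 1`, and the closed unit ball of `c₀` for `p = 1`. -/
def CoefBall (p : ℝ) (a : ℕ → ℂ) : Prop :=
  if p = 1 then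
    Filter.Tendsto (fun n => ‖a n‖) Filter.atTop (nhds 0) ∧ ∀ n, ‖a n‖ ≤ 1
  else
    ∀ s : Finset ℕ, ∑ n ∈ s, ‖a n‖ ^ (p / (p - 1)) ≤ 1

/-- The `p`-convex hull of a sequence `(x_n)`: all convergent sums `∑ a_n x_n`
with `(a_n)` in the appropriate coefficient ball. -/
def pConv (p : ℝ) (x : ℕ → E) : Set E :=
  {y | ∃ a : ℕ → ℂ, CoefBall p a ∧ HasSum (fun n => a n • x n) y}

/-- A set is relatively `p`-compact if it is contained in the `p`-convex hull of
some `p`-summable sequence. -/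
def RelPCompact (p : ℝ) (K : Set E) : Prop :=
  ∃ x : ℕ → E, Summable (fun n => ‖x n‖ ^ p) ∧ K ⊆ pConv p x

/-- The measure of `p`-compactness of a set `K`. -/
def mKp (p : ℝ) (K : Set E) : ℝ :=
  sInf {r : ℝ | ∃ x : ℕ → E, Summable (fun n => ‖x n‖ ^ p) ∧ K ⊆ pConv p x ∧
    (∑' n, ‖x n‖ ^ p) ^ (1 / p) = r}

end

/-- Hölder-type bound for finite partial sums. -/
lemma keyBound {E : Type*} [NormedAddCommGroup E] [NormedSpace ℂ E] {p q : ℝ}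
    (hpq : p.HolderConjugate q) (x : ℕ → E) (a : ℕ → ℂ)
    (ha : ∀ s : Finset ℕ, ∑ n ∈ s, ‖a n‖ ^ q ≤ 1) (s : Finset ℕ) :
    ‖∑ n ∈ s, a n • x n‖ ≤ (∑ n ∈ s, ‖x n‖ ^ p) ^ (1 / p) := by
  calc ‖∑ n ∈ s, a n • x n‖ ≤ ∑ n ∈ s, ‖x n‖ * ‖a n‖ := by
        refine (norm_sum_le _ _).trans (le_of_eq (Finset.sum_congr rfl fun n _ => ?_))
        rw [norm_smul, mul_comm]
    _ ≤ (∑ n ∈ s, ‖x n‖ ^ p) ^ (1 / p) * (∑ n ∈ s, ‖a n‖ ^ q) ^ (1 / q) :=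
        Real.inner_le_Lp_mul_Lq_of_nonneg s hpq (fun _ _ => norm_nonneg _)
          (fun _ _ => norm_nonneg _)
    _ ≤ (∑ n ∈ s, ‖x n‖ ^ p) ^ (1 / p) * 1 := by
        refine mul_le_mul_of_nonneg_left
          (Real.rpow_le_one (Finset.sum_nonneg fun n _ => Real.rpow_nonneg (norm_nonneg _) _)
            (ha s) hpq.symm.one_div_nonneg) ?_
        exact Real.rpow_nonneg
          (Finset.sum_nonneg fun n _ => Real.rpow_nonneg (norm_nonneg _) _) _
    _ = (∑ n ∈ s, ‖x n‖ ^ p) ^ (1 / p) := mul_one _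

/-- For `1 < p < ∞` and a `p`-summable sequence, the `p`-convex hull is a
relatively compact subset of `E`. -/
theorem stmt2 {E : Type*} [NormedAddCommGroup E] [NormedSpace ℂ E] [CompleteSpace E]
    {p : ℝ} (hp : 1 < p) (x : ℕ → E) (hx : Summable fun n => ‖x n‖ ^ p) :
    IsCompact (closure (pConv p x)) := by
  have hpq : p.HolderConjugate (p / (p - 1)) := Real.HolderConjugate.conjExponent hp
  set q := p / (p - 1) with hqdef
  refine TotallyBounded.isCompact_of_isClosed (TotallyBounded.closure ?_) isClosed_closure
  rw [Metric.totallyBounded_iff]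
  intro ε hε
  -- choose the cutoff N
  have hεp : (0 : ℝ) < (ε / 2) ^ p := Real.rpow_pos_of_pos (by linarith) p
  have hten : Filter.Tendsto (fun N => ∑' k, ‖x (k + N)‖ ^ p) Filter.atTop (nhds 0) :=
    tendsto_sum_nat_add (fun n => ‖x n‖ ^ p)
  obtain ⟨N, hN⟩ := (hten.eventually_lt_const hεp).exists
  have hxN : Summable fun k => ‖x (k + N)‖ ^ p := (summable_nat_add_iff N).2 hx
  have hT0 : (0 : ℝ) ≤ ∑' k, ‖x (k + N)‖ ^ p :=
    tsum_nonneg fun k => Real.rpow_nonneg (norm_nonneg _) _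
  have hTlt : (∑' k, ‖x (k + N)‖ ^ p) ^ (1 / p) < ε / 2 := by
    have h1 := Real.rpow_lt_rpow hT0 hN (by positivity : (0:ℝ) < 1 / p)
    rwa [← Real.rpow_mul (by linarith : (0:ℝ) ≤ ε / 2), mul_one_div,
      div_self (ne_of_gt (by linarith : (0:ℝ) < p)), Real.rpow_one] at h1
  -- the compact finite-dimensional head set
  set K : Set E := (fun b : Fin N → ℂ => ∑ i, b i • x (i : ℕ)) ''
    (Set.univ.pi fun _ => Metric.closedBall (0 : ℂ) 1) with hKdef
  have hKc : IsCompact K := by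
    refine IsCompact.image (isCompact_univ_pi fun _ => isCompact_closedBall _ _) ?_
    exact continuous_finset_sum _ fun i _ => (continuous_apply i).smul continuous_const
  obtain ⟨t, htf, htK⟩ := Metric.totallyBounded_iff.1 hKc.totallyBounded (ε / 2) (by linarith)
  refine ⟨t, htf, ?_⟩
  rintro y ⟨a, ha, hsum⟩
  rw [CoefBall, if_neg hp.ne'] at ha
  -- coefficients are bounded by 1
  have hale : ∀ n, ‖a n‖ ≤ 1 := by
    intro n
    by_contra h
    push_neg at h
    have h2 : (1 : ℝ) < ‖a n‖ ^ q :=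
      (Real.one_lt_rpow_iff_of_pos (by linarith)).2 (Or.inl ⟨h, hpq.symm.pos⟩)
    have h3 := ha {n}
    simp only [Finset.sum_singleton] at h3
    rw [← hqdef] at h3
    linarith
  -- split y into head and tail
  have hsummable : Summable fun n => a n • x n := hsum.summable
  have hsplit : ∑ i ∈ Finset.range N, a i • x i + ∑' i, a (i + N) • x (i + N) = y := by
    rw [Summable.sum_add_tsum_nat_add N hsummable, hsum.tsum_eq]
  -- the head belongs to K
  have hhead : (∑ i ∈ Finset.range N, a i • x i) ∈ K := by
    refine ⟨fun i => a (i : ℕ), fun i _ => ?_, ?_⟩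
    · simpa [Metric.mem_closedBall, dist_zero_right] using hale (i : ℕ)
    · exact Fin.sum_univ_eq_sum_range (fun i => a i • x i) N
  -- bound the tail
  have htail : ‖∑' i, a (i + N) • x (i + N)‖ ≤ (∑' k, ‖x (k + N)‖ ^ p) ^ (1 / p) := by
    have hsum' : HasSum (fun i => a (i + N) • x (i + N)) (∑' i, a (i + N) • x (i + N)) :=
      ((summable_nat_add_iff N).2 hsummable).hasSum
    refine le_of_tendsto' hsum'.tendsto_sum_nat.norm fun n => ?_
    set e : ℕ ↪ ℕ := ⟨fun i => i + N, add_left_injective N⟩ with hedef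
    have h1 : ∑ i ∈ Finset.range n, a (i + N) • x (i + N)
        = ∑ m ∈ (Finset.range n).map e, a m • x m := by
      rw [Finset.sum_map]; rfl
    have h2 : ∑ m ∈ (Finset.range n).map e, ‖x m‖ ^ p
        = ∑ i ∈ Finset.range n, ‖x (i + N)‖ ^ p := by
      rw [Finset.sum_map]; rfl
    calc ‖∑ i ∈ Finset.range n, a (i + N) • x (i + N)‖
        = ‖∑ m ∈ (Finset.range n).map e, a m • x m‖ := by rw [h1]
      _ ≤ (∑ m ∈ (Finset.range n).map e, ‖x m‖ ^ p) ^ (1 / p) :=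
          keyBound hpq x a (fun s => by rw [hqdef]; exact ha s) _
      _ = (∑ i ∈ Finset.range n, ‖x (i + N)‖ ^ p) ^ (1 / p) := by rw [h2]
      _ ≤ (∑' k, ‖x (k + N)‖ ^ p) ^ (1 / p) := by
          refine Real.rpow_le_rpow
            (Finset.sum_nonneg fun i _ => Real.rpow_nonneg (norm_nonneg _) _) ?_
            (by positivity)
          exact Summable.sum_le_tsum _ (fun i _ => Real.rpow_nonneg (norm_nonneg _) _) hxN
  -- conclude
  have hdisty : dist y (∑ i ∈ Finset.range N, a i • x i) < ε / 2 := by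
    rw [dist_eq_norm]
    have : y - ∑ i ∈ Finset.range N, a i • x i = ∑' i, a (i + N) • x (i + N) := by
      rw [← hsplit]; abel
    rw [this]
    exact lt_of_le_of_lt htail hTlt
  obtain ⟨z, hz, hzmem⟩ := Set.mem_iUnion₂.1 (htK hhead)
  refine Set.mem_iUnion₂.2 ⟨z, hz, ?_⟩
  rw [Metric.mem_ball] at hzmem ⊢
  calc dist y z ≤ dist y (∑ i ∈ Finset.range N, a i • x i)
        + dist (∑ i ∈ Finset.range N, a i • x i) z := dist_triangle _ _ _
    _ < ε / 2 + ε / 2 := add_lt_add hdisty hzmem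
    _ = ε := by ring
end

section
/- For 1 < p < ∞, the absolutely convex closed hull of a relatively p-compact subset K of a Banach space is relatively p-compact, and m_{K_p}(closed absolutely convex hull of K) = m_{K_p}(K). -/
open scoped BigOperators Classical

/-- The absolutely convex hull of a set: finite combinations `∑ c_i • k_i` with
`k_i ∈ K` and `∑ ‖c_i‖ ≤ 1`. -/
def absConvHull {E : Type*} [NormedAddCommGroup E] [NormedSpace ℂ E] (K : Set E) : Set E :=
  {y | ∃ (s : Finset ℕ) (c : ℕ → ℂ) (k : ℕ → E),
    (∀ n ∈ s, k n ∈ K) ∧ (∑ n ∈ s, ‖c n‖) ≤ 1 ∧ y = ∑ n ∈ s, c n • k n}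

/-! The coefficient ball `{a | CoefBall p a}` is the unit ball of `ℓ_{p*}`. It is absolutely
convex, its finite restrictions being unit balls of finite-dimensional `ℓ_{p*}` spaces, and
compact for the product topology. By Hölder's inequality the tails of `∑ aₙ • xₙ` are bounded by
the `ℓ_p`-tails of `x` uniformly in the coefficients, so `a ↦ ∑ aₙ • xₙ` is continuous on the
coefficient ball and `pConv p x` is compact, in particular closed. Hence `pConv p x` contains `K`
if and only if it contains the closed absolutely convex hull of `K`: both sets are covered by
exactly the same sequences `x`, which gives both claims. -/

open Filter Topology

section CoefBall

variable {p : ℝ} {a : ℕ → ℂ}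

lemma coefBall_iff (hp : 1 < p) :
    CoefBall p a ↔ ∀ s : Finset ℕ, ∑ n ∈ s, ‖a n‖ ^ p.conjExponent ≤ 1 := by
  rw [CoefBall, if_neg hp.ne']
  rfl

lemma coefBall_iff_forall_norm_toLp_le_one (hp : 1 < p) :
    CoefBall p a ↔ ∀ t : Finset ℕ,
      ‖WithLp.toLp (ENNReal.ofReal p.conjExponent) (fun n : t => a n)‖ ≤ 1 := by
  have hq := (Real.HolderConjugate.conjExponent hp).symm.pos
  rw [coefBall_iff hp]
  refine forall_congr' fun t => ?_
  rw [PiLp.norm_eq_sum (by rwa [ENNReal.toReal_ofReal hq.le]), ENNReal.toReal_ofReal hq.le,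
    one_div, Real.rpow_inv_le_iff_of_pos (by positivity) zero_le_one hq, Real.one_rpow]
  simp only [Finset.sum_coe_sort t fun n => ‖a n‖ ^ p.conjExponent]

lemma CoefBall.norm_le_one (hp : 1 < p) (ha : CoefBall p a) (n : ℕ) : ‖a n‖ ≤ 1 := by
  have hq := (Real.HolderConjugate.conjExponent hp).symm.pos
  simpa [← Real.rpow_le_rpow_iff (norm_nonneg _) zero_le_one hq] using (coefBall_iff hp).1 ha {n}

lemma CoefBall.comp_add_right (hp : 1 < p) (ha : CoefBall p a) (N : ℕ) :
    CoefBall p (fun n => a (n + N)) := by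
  rw [coefBall_iff hp] at ha ⊢
  intro s
  simpa [Finset.sum_map] using ha (s.map (addRightEmbedding N))

lemma CoefBall.sum_mul {ι : Type*} (hp : 1 < p) {s : Finset ι} {c : ι → ℂ} {a : ι → ℕ → ℂ}
    (hc : ∑ i ∈ s, ‖c i‖ ≤ 1) (ha : ∀ i ∈ s, CoefBall p (a i)) :
    CoefBall p (fun n => ∑ i ∈ s, c i * a i n) := by
  have : Fact (1 ≤ ENNReal.ofReal p.conjExponent) :=
    ⟨by simpa using (Real.HolderConjugate.conjExponent hp).symm.lt.le⟩
  simp only [coefBall_iff_forall_norm_toLp_le_one hp] at ha ⊢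
  intro t
  have hsum : WithLp.toLp (ENNReal.ofReal p.conjExponent) (fun n : t => ∑ i ∈ s, c i * a i n) =
      ∑ i ∈ s, c i • WithLp.toLp (ENNReal.ofReal p.conjExponent) (fun n : t => a i n) := by
    ext n
    simp
  calc _ ≤ ∑ i ∈ s,
          ‖c i‖ * ‖WithLp.toLp (ENNReal.ofReal p.conjExponent) (fun n : t => a i n)‖ := by
        rw [hsum]
        exact (norm_sum_le _ _).trans_eq (by simp only [norm_smul])
    _ ≤ ∑ i ∈ s, ‖c i‖ :=
        Finset.sum_le_sum fun i hi => mul_le_of_le_one_right (norm_nonneg _) (ha i hi t)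
    _ ≤ 1 := hc

lemma isCompact_setOf_coefBall (hp : 1 < p) : IsCompact {a : ℕ → ℂ | CoefBall p a} := by
  have hq := (Real.HolderConjugate.conjExponent hp).symm.pos
  have hclosed : IsClosed {a : ℕ → ℂ | CoefBall p a} := by
    simp_rw [coefBall_iff hp, Set.ofPred_forall]
    exact isClosed_iInter fun s => isClosed_le
      (continuous_finsetSum _ fun n _ => (continuous_apply n).norm.rpow_const
        fun _ => Or.inr hq.le) continuous_const
  refine (isCompact_univ_pi fun _ => isCompact_closedBall (0 : ℂ) 1).of_isClosed_subset
    hclosed fun a ha n _ => ?_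
  simpa using ha.norm_le_one hp n

end CoefBall

section Holder

variable {E : Type*} [NormedAddCommGroup E] {p : ℝ} {a : ℕ → ℂ} {x : ℕ → E}

lemma CoefBall.sum_mul_norm_le (hp : 1 < p) (ha : CoefBall p a)
    (hx : Summable fun n => ‖x n‖ ^ p) (s : Finset ℕ) :
    ∑ n ∈ s, ‖a n‖ * ‖x n‖ ≤ (∑' n, ‖x n‖ ^ p) ^ (1 / p) := by
  have hpq := (Real.HolderConjugate.conjExponent hp).symm
  calc ∑ n ∈ s, ‖a n‖ * ‖x n‖
      ≤ (∑ n ∈ s, ‖a n‖ ^ p.conjExponent) ^ (1 / p.conjExponent) *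
          (∑ n ∈ s, ‖x n‖ ^ p) ^ (1 / p) :=
        Real.inner_le_Lp_mul_Lq_of_nonneg s hpq (fun _ _ => norm_nonneg _)
          (fun _ _ => norm_nonneg _)
    _ ≤ 1 * (∑ n ∈ s, ‖x n‖ ^ p) ^ (1 / p) := by
        gcongr
        exact Real.rpow_le_one (by positivity) ((coefBall_iff hp).1 ha s) hpq.one_div_nonneg
    _ ≤ (∑' n, ‖x n‖ ^ p) ^ (1 / p) := by
        rw [one_mul]
        gcongr
        exact hx.sum_le_tsum s fun _ _ => by positivity

lemma CoefBall.summable_mul_norm (hp : 1 < p) (ha : CoefBall p a)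
    (hx : Summable fun n => ‖x n‖ ^ p) : Summable fun n => ‖a n‖ * ‖x n‖ :=
  summable_of_sum_le (fun _ => by positivity) (ha.sum_mul_norm_le hp hx)

lemma CoefBall.summable_smul [NormedSpace ℂ E] [CompleteSpace E] (hp : 1 < p)
    (ha : CoefBall p a) (hx : Summable fun n => ‖x n‖ ^ p) : Summable fun n => a n • x n :=
  .of_norm (by simpa only [norm_smul] using ha.summable_mul_norm hp hx)

lemma CoefBall.norm_tsum_smul_le [NormedSpace ℂ E] (hp : 1 < p) (ha : CoefBall p a)
    (hx : Summable fun n => ‖x n‖ ^ p) :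
    ‖∑' n, a n • x n‖ ≤ (∑' n, ‖x n‖ ^ p) ^ (1 / p) := by
  have hsum : Summable fun n => ‖a n • x n‖ := by
    simpa only [norm_smul] using ha.summable_mul_norm hp hx
  refine (norm_tsum_le_tsum_norm hsum).trans ?_
  simp only [norm_smul]
  exact (ha.summable_mul_norm hp hx).tsum_le_of_sum_le (ha.sum_mul_norm_le hp hx)

end Holder

section PConv

variable {E : Type*} [NormedAddCommGroup E] [NormedSpace ℂ E] {p : ℝ} {x : ℕ → E}

lemma tendstoUniformlyOn_sum_range_smul [CompleteSpace E] (hp : 1 < p)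
    (hx : Summable fun n => ‖x n‖ ^ p) :
    TendstoUniformlyOn (fun N (a : ℕ → ℂ) => ∑ n ∈ Finset.range N, a n • x n)
      (fun a => ∑' n, a n • x n) atTop {a | CoefBall p a} := by
  have htail : Tendsto (fun N => (∑' k, ‖x (k + N)‖ ^ p) ^ (1 / p)) atTop (𝓝 0) := by
    have hp' : 0 < 1 / p := one_div_pos.2 (zero_lt_one.trans hp)
    have := (tendsto_sum_nat_add fun n => ‖x n‖ ^ p).rpow_const (p := 1 / p) (Or.inr hp'.le)
    rwa [Real.zero_rpow hp'.ne'] at this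
  rw [Metric.tendstoUniformlyOn_iff]
  intro ε hε
  filter_upwards [htail.eventually (gt_mem_nhds hε)] with N hN a ha
  rw [dist_eq_norm, ← Summable.sum_add_tsum_nat_add N (ha.summable_smul hp hx),
    add_sub_cancel_left]
  exact ((ha.comp_add_right hp N).norm_tsum_smul_le hp
    ((summable_nat_add_iff N).2 hx)).trans_lt hN

lemma pConv_eq_image [CompleteSpace E] (hp : 1 < p) (hx : Summable fun n => ‖x n‖ ^ p) :
    pConv p x = (fun a : ℕ → ℂ => ∑' n, a n • x n) '' {a | CoefBall p a} := by
  ext y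
  constructor
  · rintro ⟨a, ha, hsum⟩
    exact ⟨a, ha, hsum.tsum_eq⟩
  · rintro ⟨a, ha, rfl⟩
    exact ⟨a, ha, (ha.summable_smul hp hx).hasSum⟩

lemma isCompact_pConv [CompleteSpace E] (hp : 1 < p) (hx : Summable fun n => ‖x n‖ ^ p) :
    IsCompact (pConv p x) := by
  rw [pConv_eq_image hp hx]
  refine (isCompact_setOf_coefBall hp).image_of_continuousOn
    ((tendstoUniformlyOn_sum_range_smul hp hx).continuousOn (Frequently.of_forall fun N => ?_))
  fun_prop

lemma absConvHull_subset_pConv (hp : 1 < p) {K : Set E} (hK : K ⊆ pConv p x) :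
    absConvHull K ⊆ pConv p x := by
  rintro _ ⟨s, c, k, hk, hc, rfl⟩
  choose! a ha hsum using fun n (hn : n ∈ s) => hK (hk n hn)
  refine ⟨fun m => ∑ n ∈ s, c n * a n m, CoefBall.sum_mul hp hc ha, ?_⟩
  simp only [Finset.sum_smul, mul_smul]
  exact hasSum_sum fun n hn => (hsum n hn).const_smul (c n)

lemma subset_absConvHull (K : Set E) : K ⊆ absConvHull K :=
  fun y hy => ⟨{0}, fun _ => 1, fun _ => y, fun _ _ => hy, by simp, by simp⟩

lemma closure_absConvHull_subset_pConv_iff [CompleteSpace E] (hp : 1 < p)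
    (hx : Summable fun n => ‖x n‖ ^ p) {K : Set E} :
    closure (absConvHull K) ⊆ pConv p x ↔ K ⊆ pConv p x :=
  ⟨(subset_absConvHull K).trans subset_closure |>.trans,
    fun hK => (isCompact_pConv hp hx).isClosed.closure_subset_iff.2
      (absConvHull_subset_pConv hp hK)⟩

end PConv

/-- For `1 < p < ∞`, the closed absolutely convex hull of a relatively
`p`-compact set is relatively `p`-compact with the same measure of
`p`-compactness. -/
theorem stmt6 {E : Type*} [NormedAddCommGroup E] [NormedSpace ℂ E] [CompleteSpace E]
    {p : ℝ} (hp : 1 < p) (K : Set E) (hK : RelPCompact p K) :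
    RelPCompact p (closure (absConvHull K)) ∧
      mKp p (closure (absConvHull K)) = mKp p K := by
  obtain ⟨x, hx, hKx⟩ := hK
  refine ⟨⟨x, hx, (closure_absConvHull_subset_pConv_iff hp hx).2 hKx⟩, ?_⟩
  refine congrArg sInf (Set.ext fun r => exists_congr fun y => and_congr_right fun hy => ?_)
  rw [closure_absConvHull_subset_pConv_iff hp hy]
end

section
/- Let U, V be open subsets of a complex Banach space E with V ⊆ U, v a weight on U∪V, h : V → U holomorphic with c_v(h) := sup_{x∈V} v(x)/v(h(x)) < ∞, and f ∈ H^∞_v(U,F). Then f∘h ∈ H^∞_v(V,F) with ‖f∘h‖_v ≤ c_v(h)·‖f‖_v. -/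
lemma mul_le_mul_of_div_le_of_mul_le {a b c A M : ℝ} (ha : 0 ≤ a) (hb : 0 < b)
    (hab : a / b ≤ c) (hA : 0 ≤ A) (hbA : b * A ≤ M) : a * A ≤ c * M :=
  calc a * A = a / b * (b * A) := by field_simp
    _ ≤ c * M := mul_le_mul hab hbA (by positivity) ((div_nonneg ha hb.le).trans hab)

theorem stmt12_general {E F : Type*} [NormedAddCommGroup E] [NormedSpace ℂ E]
    [NormedAddCommGroup F] [NormedSpace ℂ F]
    (U V : Set E) (hVU : V ⊆ U)
    (v : E → ℝ) (hvpos : ∀ x ∈ U, 0 < v x)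
    (h : E → E) (hh : DifferentiableOn ℂ h V) (hmaps : Set.MapsTo h V U)
    (c : ℝ) (hc : ∀ x ∈ V, v x / v (h x) ≤ c)
    (f : E → F) (hf : DifferentiableOn ℂ f U)
    (M : ℝ) (hM : ∀ x ∈ U, v x * ‖f x‖ ≤ M) :
    DifferentiableOn ℂ (fun x => f (h x)) V ∧
      ∀ x ∈ V, v x * ‖f (h x)‖ ≤ c * M :=
  ⟨hf.comp hh hmaps, fun x hx =>
    mul_le_mul_of_div_le_of_mul_le (hvpos x (hVU hx)).le (hvpos _ (hmaps hx)) (hc x hx)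
      (norm_nonneg _) (hM _ (hmaps hx))⟩

/-- Composition with a holomorphic `h : V → U` satisfying
`c_v(h) = sup_{x∈V} v(x)/v(h(x)) ≤ c < ∞`: if `f ∈ H^∞_v(U,F)` then
`f∘h ∈ H^∞_v(V,F)` with `‖f∘h‖_v ≤ c_v(h)·‖f‖_v`. -/
theorem stmt12 {E F : Type*} [NormedAddCommGroup E] [NormedSpace ℂ E]
    [NormedAddCommGroup F] [NormedSpace ℂ F]
    (U V : Set E) (hU : IsOpen U) (hV : IsOpen V) (hVU : V ⊆ U)
    (v : E → ℝ) (hv : ContinuousOn v U) (hvpos : ∀ x ∈ U, 0 < v x)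
    (h : E → E) (hh : DifferentiableOn ℂ h V) (hmaps : Set.MapsTo h V U)
    (c : ℝ) (hc : ∀ x ∈ V, v x / v (h x) ≤ c)
    (f : E → F) (hf : DifferentiableOn ℂ f U)
    (M : ℝ) (hM0 : 0 ≤ M) (hM : ∀ x ∈ U, v x * ‖f x‖ ≤ M) :
    DifferentiableOn ℂ (fun x => f (h x)) V ∧
      ∀ x ∈ V, v x * ‖f (h x)‖ ≤ c * M :=
  stmt12_general U V hVU v hvpos h hh hmaps c hc f hf M hM
end

section
/- Let U be open in a complex Banach space E, v a weight on U, F a complex Banach space, and f ∈ H^∞_v(U,F). The transpose map f^t : F* → H^∞_v(U,ℂ), y* ↦ y*∘f, is a well-defined bounded linear operator with ‖f^t‖ = ‖f‖_v. -/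
/-!
Put `g x := v x • f x`, so that `‖f‖_v` is the sup norm of the bounded family `g` and
`‖y* ∘ f‖_v` is the sup norm of `y* ∘ g`. The bound `‖y*‖ ‖f‖_v` is then the operator norm
inequality, and equality for the transpose is attained because, by Hahn–Banach, every `g x`
is normed by a functional of norm at most one.
-/

open Metric

section DualSup

variable {𝕜 F ι : Type*} [RCLike 𝕜] [SeminormedAddCommGroup F] [NormedSpace 𝕜 F]

theorem StrongDual.norm_apply_le_mul_iSup_norm (φ : StrongDual 𝕜 F) {g : ι → F}
    (hg : BddAbove (Set.range fun i => ‖g i‖)) (i : ι) :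
    ‖φ (g i)‖ ≤ ‖φ‖ * ⨆ j, ‖g j‖ :=
  (φ.le_opNorm _).trans (mul_le_mul_of_nonneg_left (le_ciSup hg i) (norm_nonneg φ))

theorem StrongDual.bddAbove_range_norm_apply (φ : StrongDual 𝕜 F) {g : ι → F}
    (hg : BddAbove (Set.range fun i => ‖g i‖)) :
    BddAbove (Set.range fun i => ‖φ (g i)‖) :=
  ⟨_, Set.forall_mem_range.2 (φ.norm_apply_le_mul_iSup_norm hg)⟩

theorem iSup_closedBall_dual_iSup_norm_apply {g : ι → F}
    (hg : BddAbove (Set.range fun i => ‖g i‖)) :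
    ⨆ φ : closedBall (0 : StrongDual 𝕜 F) 1, ⨆ i, ‖(φ : StrongDual 𝕜 F) (g i)‖ =
      ⨆ i, ‖g i‖ := by
  have hM : 0 ≤ ⨆ i, ‖g i‖ := Real.iSup_nonneg fun i => norm_nonneg _
  have hinner (φ : closedBall (0 : StrongDual 𝕜 F) 1) :
      ⨆ i, ‖(φ : StrongDual 𝕜 F) (g i)‖ ≤ ⨆ i, ‖g i‖ := by
    refine Real.iSup_le (fun i => ?_) hM
    have hφ : ‖(φ : StrongDual 𝕜 F)‖ ≤ 1 := mem_closedBall_zero_iff.1 φ.2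
    calc ‖(φ : StrongDual 𝕜 F) (g i)‖ ≤ ‖(φ : StrongDual 𝕜 F)‖ * ⨆ j, ‖g j‖ :=
          StrongDual.norm_apply_le_mul_iSup_norm _ hg i
      _ ≤ ⨆ j, ‖g j‖ := mul_le_of_le_one_left hM hφ
  refine le_antisymm (Real.iSup_le hinner hM) (Real.iSup_le (fun i => ?_) ?_)
  · obtain ⟨φ, hφ, hφi⟩ := exists_dual_vector'' 𝕜 (g i)
    have hφmem : φ ∈ closedBall (0 : StrongDual 𝕜 F) 1 := mem_closedBall_zero_iff.2 hφ
    calc ‖g i‖ = ‖φ (g i)‖ := by rw [hφi, RCLike.norm_ofReal, abs_norm]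
      _ ≤ ⨆ j, ‖φ (g j)‖ := le_ciSup (φ.bddAbove_range_norm_apply hg) i
      _ ≤ _ := le_ciSup (f := fun φ : closedBall (0 : StrongDual 𝕜 F) 1 =>
          ⨆ j, ‖(φ : StrongDual 𝕜 F) (g j)‖)
            ⟨_, Set.forall_mem_range.2 hinner⟩ ⟨φ, hφmem⟩
  · exact Real.iSup_nonneg fun φ => Real.iSup_nonneg fun i => norm_nonneg _

end DualSup

theorem stmt13_general {E F : Type*} [NormedAddCommGroup E] [NormedSpace ℂ E]
    [NormedAddCommGroup F] [NormedSpace ℂ F]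
    (U : Set E) (v : E → ℝ)
    (hvpos : ∀ x ∈ U, 0 < v x)
    (f : E → F) (hf : DifferentiableOn ℂ f U)
    (hb : BddAbove (Set.range fun x : U => v x.1 * ‖f x.1‖)) :
    (∀ φ : StrongDual ℂ F,
      DifferentiableOn ℂ (fun x => φ (f x)) U ∧
      ∀ x ∈ U, v x * ‖φ (f x)‖ ≤ ‖φ‖ * ⨆ x : U, v x.1 * ‖f x.1‖) ∧
    (⨆ φ : Metric.closedBall (0 : StrongDual ℂ F) 1,
        ⨆ x : U, v x.1 * ‖(φ : StrongDual ℂ F) (f x.1)‖) =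
      ⨆ x : U, v x.1 * ‖f x.1‖ := by
  set g : U → F := fun x => (v x.1 : ℂ) • f x.1
  have hg (x : U) : ‖g x‖ = v x.1 * ‖f x.1‖ := by
    rw [norm_smul, Complex.norm_of_nonneg (hvpos x.1 x.2).le]
  have hφg (φ : StrongDual ℂ F) (x : U) : ‖φ (g x)‖ = v x.1 * ‖φ (f x.1)‖ := by
    rw [map_smul, norm_smul, Complex.norm_of_nonneg (hvpos x.1 x.2).le]
  simp_rw [← hg] at hb ⊢
  refine ⟨fun φ => ⟨φ.differentiable.comp_differentiableOn hf, fun x hx => ?_⟩, ?_⟩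
  · rw [← hφg φ ⟨x, hx⟩]
    exact φ.norm_apply_le_mul_iSup_norm hb _
  · simp_rw [← hφg]
    exact iSup_closedBall_dual_iSup_norm_apply hb

/-- The transpose `f^t : F* → H^∞_v(U,ℂ)`, `y* ↦ y*∘f`, of `f ∈ H^∞_v(U,F)` is
well defined (each `y*∘f` is holomorphic with `‖y*∘f‖_v ≤ ‖y*‖·‖f‖_v`) and its
operator norm equals `‖f‖_v`. -/
theorem stmt13 {E F : Type*} [NormedAddCommGroup E] [NormedSpace ℂ E]
    [NormedAddCommGroup F] [NormedSpace ℂ F] [CompleteSpace F]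
    (U : Set E) (hU : IsOpen U) (v : E → ℝ) (hv : ContinuousOn v U)
    (hvpos : ∀ x ∈ U, 0 < v x)
    (f : E → F) (hf : DifferentiableOn ℂ f U)
    (hb : BddAbove (Set.range fun x : U => v x.1 * ‖f x.1‖)) :
    (∀ φ : StrongDual ℂ F,
      DifferentiableOn ℂ (fun x => φ (f x)) U ∧
      ∀ x ∈ U, v x * ‖φ (f x)‖ ≤ ‖φ‖ * ⨆ x : U, v x.1 * ‖f x.1‖) ∧
    (⨆ φ : Metric.closedBall (0 : StrongDual ℂ F) 1,
        ⨆ x : U, v x.1 * ‖(φ : StrongDual ℂ F) (f x.1)‖) =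
      ⨆ x : U, v x.1 * ‖f x.1‖ :=
  stmt13_general U v hvpos f hf hb
end

section
/- Let U be open in a complex Banach space E, v a weight on U, F a complex Banach space, p ∈ (1,∞). If f = S∘g where g ∈ H^∞_v(U,G) for a complex Banach space G and S : G → F is a p-compact operator, then the set (vf)(U) = {v(x)f(x) : x ∈ U} is relatively p-compact in F, with m_{K_p}((vf)(U)) ≤ ‖S‖_{K_p}·‖g‖_v. -/
open scoped BigOperators Classical

/-! Since `v x * ‖g x‖ ≤ ‖g‖_v`, the set `(v f)(U) = S((v g)(U))` lies in `‖g‖_v • S(B_G)`.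
Scaling a sequence by `c ≥ 0` scales its `p`-convex hull and its `ℓ_p` norm by `c`, so every
representation of `S(B_G)` as part of a `p`-convex hull gives one of `(v f)(U)` whose norm is
multiplied by `‖g‖_v`. -/

open scoped Pointwise

section PConvexHull

variable {E : Type*} [NormedAddCommGroup E] [NormedSpace ℂ E] {p : ℝ}

theorem smul_set_pConv_subset (c : ℝ) (x : ℕ → E) : c • pConv p x ⊆ pConv p (c • x) := by
  rintro _ ⟨y, ⟨a, ha, hsum⟩, rfl⟩
  refine ⟨a, ha, ?_⟩
  simpa only [Pi.smul_apply, smul_comm (a _) c] using hsum.const_smul c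

theorem summable_norm_smul_rpow {x : ℕ → E} (hx : Summable fun n => ‖x n‖ ^ p) {c : ℝ}
    (hc : 0 ≤ c) : Summable fun n => ‖(c • x) n‖ ^ p := by
  simpa only [Pi.smul_apply, norm_smul, Real.norm_of_nonneg hc,
    Real.mul_rpow hc (norm_nonneg _)] using hx.mul_left (c ^ p)

theorem tsum_norm_smul_rpow_rpow_one_div (hp : p ≠ 0) (x : ℕ → E) {c : ℝ} (hc : 0 ≤ c) :
    (∑' n, ‖(c • x) n‖ ^ p) ^ (1 / p) = c * (∑' n, ‖x n‖ ^ p) ^ (1 / p) := by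
  simp only [Pi.smul_apply, norm_smul, Real.norm_of_nonneg hc,
    Real.mul_rpow hc (norm_nonneg _), tsum_mul_left]
  rw [Real.mul_rpow (Real.rpow_nonneg hc _) (tsum_nonneg fun n => Real.rpow_nonneg (norm_nonneg _) _),
    ← Real.rpow_mul hc, mul_one_div_cancel hp, Real.rpow_one]

theorem RelPCompact.of_subset_smul {K L : Set E} (hK : RelPCompact p K) {c : ℝ} (hc : 0 ≤ c)
    (hL : L ⊆ c • K) : RelPCompact p L := by
  obtain ⟨x, hx, hKx⟩ := hK
  exact ⟨c • x, summable_norm_smul_rpow hx hc,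
    hL.trans ((Set.smul_set_mono hKx).trans (smul_set_pConv_subset c x))⟩

theorem mKp_le {K : Set E} {x : ℕ → E} (hx : Summable fun n => ‖x n‖ ^ p)
    (hKx : K ⊆ pConv p x) : mKp p K ≤ (∑' n, ‖x n‖ ^ p) ^ (1 / p) :=
  csInf_le ⟨0, by rintro _ ⟨y, -, -, rfl⟩; positivity⟩ ⟨x, hx, hKx, rfl⟩

theorem mKp_le_mul_of_subset_smul (hp : p ≠ 0) {K L : Set E} (hK : RelPCompact p K) {c : ℝ}
    (hc : 0 ≤ c) (hL : L ⊆ c • K) : mKp p L ≤ c * mKp p K := by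
  rw [← smul_eq_mul]
  unfold mKp
  rw [← Real.sInf_smul_of_nonneg hc]
  obtain ⟨x, hx, hKx⟩ := hK
  refine le_csInf ⟨_, Set.smul_mem_smul_set ⟨x, hx, hKx, rfl⟩⟩ ?_
  rintro _ ⟨_, ⟨y, hy, hKy, rfl⟩, rfl⟩
  show _ ≤ c * _
  rw [← tsum_norm_smul_rpow_rpow_one_div hp y hc]
  exact mKp_le (summable_norm_smul_rpow hy hc)
    (hL.trans ((Set.smul_set_mono hKy).trans (smul_set_pConv_subset c y)))

end PConvexHull

theorem stmt15_general {E F G : Type*}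
    [NormedAddCommGroup F] [NormedSpace ℂ F]
    [NormedAddCommGroup G] [NormedSpace ℂ G]
    (U : Set E) (v : E → ℝ)
    (hvpos : ∀ x ∈ U, 0 < v x)
    {p : ℝ} (hp : 1 < p)
    (S : G →L[ℂ] F) (hS : RelPCompact p (S '' Metric.closedBall 0 1))
    (g : E → G)
    (hb : BddAbove (Set.range fun x : U => v x.1 * ‖g x.1‖)) :
    RelPCompact p ((fun x => v x • S (g x)) '' U) ∧
      mKp p ((fun x => v x • S (g x)) '' U) ≤
        mKp p (S '' Metric.closedBall 0 1) * ⨆ x : U, v x.1 * ‖g x.1‖ := by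
  set M := ⨆ x : U, v x.1 * ‖g x.1‖
  have hM : 0 ≤ M := Real.iSup_nonneg fun x => mul_nonneg (hvpos x x.2).le (norm_nonneg _)
  have hsub : (fun x => v x • S (g x)) '' U ⊆ M • S '' Metric.closedBall 0 1 := by
    rintro _ ⟨x, hx, rfl⟩
    have hS_smul : S '' (M • Metric.closedBall 0 1) = M • S '' Metric.closedBall 0 1 :=
      image_smul_set (S.restrictScalars ℝ) M _
    rw [← hS_smul, smul_unitClosedBall_of_nonneg hM]
    refine ⟨v x • g x, ?_, S.map_smul_of_tower _ _⟩
    rw [mem_closedBall_zero_iff, norm_smul, Real.norm_of_nonneg (hvpos x hx).le]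
    exact le_ciSup hb ⟨x, hx⟩
  exact ⟨hS.of_subset_smul hM hsub,
    mul_comm M _ ▸ mKp_le_mul_of_subset_smul (by linarith) hS hM hsub⟩

/-- If `f = S ∘ g` with `g ∈ H^∞_v(U,G)` and `S : G → F` a `p`-compact
operator, then the `v`-range `(vf)(U)` is relatively `p`-compact, with
`m_{K_p}((vf)(U)) ≤ ‖S‖_{K_p} · ‖g‖_v`. -/
theorem stmt15 {E F G : Type*} [NormedAddCommGroup E] [NormedSpace ℂ E]
    [NormedAddCommGroup F] [NormedSpace ℂ F] [CompleteSpace F]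
    [NormedAddCommGroup G] [NormedSpace ℂ G]
    (U : Set E) (hU : IsOpen U) (v : E → ℝ) (hv : ContinuousOn v U)
    (hvpos : ∀ x ∈ U, 0 < v x)
    {p : ℝ} (hp : 1 < p)
    (S : G →L[ℂ] F) (hS : RelPCompact p (S '' Metric.closedBall 0 1))
    (g : E → G) (hg : DifferentiableOn ℂ g U)
    (hb : BddAbove (Set.range fun x : U => v x.1 * ‖g x.1‖)) :
    RelPCompact p ((fun x => v x • S (g x)) '' U) ∧
      mKp p ((fun x => v x • S (g x)) '' U) ≤
        mKp p (S '' Metric.closedBall 0 1) * ⨆ x : U, v x.1 * ‖g x.1‖ :=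
  stmt15_general U v hvpos hp S hS g hb
end

section
/- Let p ∈ (1,∞) and let T : E → F be a quasi p-nuclear operator between Banach spaces, i.e., there exists (x_n*) ∈ ℓ_p(E*) with ‖T(x)‖ ≤ (∑|x_n*(x)|^p)^{1/p} for all x ∈ E. Then T is a compact operator. -/
/-!
Split the sequence at `N`: the first `N` functionals form a finite-rank map `Φ_N : E → ℂ^N`,
and since `t ↦ t ^ (1/p)` is subadditive, the remaining ones contribute at most
`(∑_{n ≥ N} ‖x n‖ ^ p) ^ (1/p) * ‖u‖`. Hence `‖T u‖ ≤ N ^ (1/p) ‖Φ_N u‖ + ε_N ‖u‖` with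
`ε_N → 0`, and an operator dominated in this way by finite-rank operators, up to arbitrarily
small multiples of the norm, maps the unit ball onto a totally bounded set.
-/

open Filter Metric Set Topology

section CompactnessCriterion

variable {𝕜 E F : Type*} {G : ℕ → Type*} [NontriviallyNormedField 𝕜]
  [NormedAddCommGroup E] [NormedSpace 𝕜 E] [NormedAddCommGroup F] [NormedSpace 𝕜 F]
  [∀ n, NormedAddCommGroup (G n)] [∀ n, NormedSpace 𝕜 (G n)] [∀ n, ProperSpace (G n)]

theorem isCompactOperator_of_forall_le_add [CompleteSpace F] (T : E →L[𝕜] F)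
    (h : ∀ ε > 0, ∃ (n : ℕ) (K : E →L[𝕜] G n), ∀ u, ‖T u‖ ≤ ‖K u‖ + ε * ‖u‖) :
    IsCompactOperator T := by
  refine (isCompactOperator_iff_isCompact_closure_image_closedBall T.toLinearMap one_pos).2 ?_
  refine TotallyBounded.isCompact_of_isClosed (TotallyBounded.closure ?_) isClosed_closure
  refine Metric.totallyBounded_iff.2 fun ε hε => ?_
  obtain ⟨n, K, hK⟩ := h (ε / 3) (by positivity)
  have hKB : TotallyBounded (K '' closedBall 0 1) := by
    refine (isCompact_closedBall (0 : G n) ‖K‖).totallyBounded.subset ?_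
    rintro _ ⟨e, he, rfl⟩
    simpa using K.le_opNorm_of_le (mem_closedBall_zero_iff.1 he)
  obtain ⟨t, htB, htfin, hcover⟩ := exists_subset_image_finite_and.1
    (finite_approx_of_totallyBounded hKB (ε / 3) (by positivity))
  refine ⟨T '' t, htfin.image T, ?_⟩
  rintro _ ⟨e, he, rfl⟩
  obtain ⟨e', he't, hee'⟩ : ∃ e' ∈ t, dist (K e) (K e') < ε / 3 := by
    simpa using hcover ⟨e, he, rfl⟩
  refine mem_biUnion (mem_image_of_mem T he't) ?_
  have hdiam : ‖e - e'‖ ≤ 2 := by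
    have := mem_closedBall_zero_iff.1 he
    have := mem_closedBall_zero_iff.1 (htB he't)
    linarith [norm_sub_le e e']
  rw [mem_ball, dist_eq_norm, ContinuousLinearMap.coe_coe, ← map_sub]
  rw [dist_eq_norm, ← map_sub] at hee'
  calc ‖T (e - e')‖ ≤ ‖K (e - e')‖ + ε / 3 * ‖e - e'‖ := hK _
    _ < ε / 3 + ε / 3 * 2 := add_lt_add_of_lt_of_le hee' (by gcongr)
    _ = ε := by ring

end CompactnessCriterion

section SummableFamily

variable {𝕜 E G : Type*} [NontriviallyNormedField 𝕜] [NormedAddCommGroup E] [NormedSpace 𝕜 E]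
  [NormedAddCommGroup G] [NormedSpace 𝕜 G] {p : ℝ} {x : ℕ → E →L[𝕜] G}

theorem rpow_norm_apply_le (hp : 0 ≤ p) (f : E →L[𝕜] G) (u : E) :
    ‖f u‖ ^ p ≤ ‖f‖ ^ p * ‖u‖ ^ p := by
  rw [← Real.mul_rpow (norm_nonneg _) (norm_nonneg _)]
  exact Real.rpow_le_rpow (norm_nonneg _) (f.le_opNorm u) hp

theorem summable_rpow_norm_apply (hp : 0 ≤ p) (hx : Summable fun n => ‖x n‖ ^ p) (u : E) :
    Summable fun n => ‖x n u‖ ^ p :=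
  (hx.mul_right (‖u‖ ^ p)).of_nonneg_of_le (fun _ => by positivity)
    fun n => rpow_norm_apply_le hp (x n) u

theorem tsum_rpow_norm_apply_le (hp : 0 ≤ p) (hx : Summable fun n => ‖x n‖ ^ p) (u : E) :
    ∑' n, ‖x n u‖ ^ p ≤ (∑' n, ‖x n‖ ^ p) * ‖u‖ ^ p := by
  rw [← tsum_mul_right]
  exact (summable_rpow_norm_apply hp hx u).tsum_le_tsum (fun n => rpow_norm_apply_le hp (x n) u)
    (hx.mul_right _)

theorem rpow_tsum_rpow_norm_apply_le (hp : 1 ≤ p) (hx : Summable fun n => ‖x n‖ ^ p)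
    (N : ℕ) (u : E) :
    (∑' n, ‖x n u‖ ^ p) ^ (1 / p) ≤
      (N : ℝ) ^ (1 / p) * ‖ContinuousLinearMap.pi (fun i : Fin N => x i) u‖ +
        (∑' n, ‖x (n + N)‖ ^ p) ^ (1 / p) * ‖u‖ := by
  have hp0 : 0 < p := zero_lt_one.trans_le hp
  set Φ := ContinuousLinearMap.pi fun i : Fin N => x i
  have hhead : ∑ i ∈ Finset.range N, ‖x i u‖ ^ p ≤ N * ‖Φ u‖ ^ p := by
    simpa using Finset.sum_le_card_nsmul (Finset.range N) (fun i => ‖x i u‖ ^ p) (‖Φ u‖ ^ p)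
      fun i hi => by
        gcongr
        exact norm_le_pi_norm (Φ u) ⟨i, Finset.mem_range.1 hi⟩
  have htail : ∑' n, ‖x (n + N) u‖ ^ p ≤ (∑' n, ‖x (n + N)‖ ^ p) * ‖u‖ ^ p :=
    tsum_rpow_norm_apply_le hp0.le ((summable_nat_add_iff N).2 hx) u
  have hinv : ∀ a : ℝ, 0 ≤ a → (a ^ p) ^ (1 / p) = a := fun a ha => by
    rw [one_div, Real.rpow_rpow_inv ha hp0.ne']
  calc (∑' n, ‖x n u‖ ^ p) ^ (1 / p)
      = (∑ i ∈ Finset.range N, ‖x i u‖ ^ p + ∑' n, ‖x (n + N) u‖ ^ p) ^ (1 / p) := by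
        rw [(summable_rpow_norm_apply hp0.le hx u).sum_add_tsum_nat_add]
    _ ≤ (∑ i ∈ Finset.range N, ‖x i u‖ ^ p) ^ (1 / p) + (∑' n, ‖x (n + N) u‖ ^ p) ^ (1 / p) :=
        Real.rpow_add_le_add_rpow (by positivity) (by positivity) (by positivity)
          ((div_le_one hp0).2 hp)
    _ ≤ (N * ‖Φ u‖ ^ p) ^ (1 / p) + ((∑' n, ‖x (n + N)‖ ^ p) * ‖u‖ ^ p) ^ (1 / p) := by
        gcongr
    _ = _ := by
        rw [Real.mul_rpow (by positivity) (by positivity),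
          Real.mul_rpow (by positivity) (by positivity), hinv _ (norm_nonneg _),
          hinv _ (norm_nonneg _)]

end SummableFamily

theorem stmt16_general {E F : Type*} [NormedAddCommGroup E] [NormedSpace ℂ E]
    [NormedAddCommGroup F] [NormedSpace ℂ F] [CompleteSpace F]
    {p : ℝ} (hp : 1 < p) (T : E →L[ℂ] F)
    (x : ℕ → StrongDual ℂ E) (hx : Summable fun n => ‖x n‖ ^ p)
    (hT : ∀ e : E, ‖T e‖ ≤ (∑' n, ‖x n e‖ ^ p) ^ (1 / p)) :
    IsCompactOperator T := by
  refine isCompactOperator_of_forall_le_add (G := fun n => Fin n → ℂ) T fun ε hε => ?_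
  have htail : Tendsto (fun N => (∑' n, ‖x (n + N)‖ ^ p) ^ (1 / p)) atTop (𝓝 0) := by
    have := (tendsto_sum_nat_add fun n => ‖x n‖ ^ p).rpow_const (p := 1 / p)
      (Or.inr (by positivity))
    rwa [Real.zero_rpow (by positivity)] at this
  obtain ⟨N, hN⟩ := (htail.eventually (ge_mem_nhds hε)).exists
  refine ⟨N, (((N : ℝ) ^ (1 / p) : ℝ) : ℂ) • ContinuousLinearMap.pi (fun i : Fin N => x i),
    fun u => ?_⟩
  calc ‖T u‖ ≤ (∑' n, ‖x n u‖ ^ p) ^ (1 / p) := hT u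
    _ ≤ _ := rpow_tsum_rpow_norm_apply_le hp.le hx N u
    _ ≤ _ := by
        rw [smul_apply, norm_smul, Complex.norm_real, Real.norm_of_nonneg (by positivity)]
        gcongr

/-- Every quasi `p`-nuclear operator between Banach spaces is compact. -/
theorem stmt16 {E F : Type*} [NormedAddCommGroup E] [NormedSpace ℂ E] [CompleteSpace E]
    [NormedAddCommGroup F] [NormedSpace ℂ F] [CompleteSpace F]
    {p : ℝ} (hp : 1 < p) (T : E →L[ℂ] F)
    (x : ℕ → StrongDual ℂ E) (hx : Summable fun n => ‖x n‖ ^ p)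
    (hT : ∀ e : E, ‖T e‖ ≤ (∑' n, ‖x n e‖ ^ p) ^ (1 / p)) :
    IsCompactOperator T :=
  stmt16_general hp T x hx hT
end

section
/- Let p ∈ (1,∞), E, F Banach spaces, and T : E → F a right p-nuclear operator, i.e., T(x) = ∑_n x_n*(x) y_n with (x_n*) weakly p*-summable in E* and (y_n) ∈ ℓ_p(F), the series converging in operator norm. Then T(B_E) is a relatively p-compact subset of F. -/
open scoped BigOperators Classical

/-! Rescale `y` by a constant `c` with `c ^ q` above the weak `ℓ_q` bound of `(x_n^*)`: for `‖e‖ ≤ 1`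
the coefficients `x_n^*(e) / c` then lie in the unit ball of `ℓ_q`, while `T e = ∑ x_n^*(e) y_n` is
their combination of the `p`-summable vectors `c • y_n`. -/

section

variable {E : Type*} [NormedAddCommGroup E] [NormedSpace ℂ E]

lemma coefBall_iff_of_ne_one {p : ℝ} (hp : p ≠ 1) (a : ℕ → ℂ) :
    CoefBall p a ↔ ∀ s : Finset ℕ, ∑ n ∈ s, ‖a n‖ ^ (p / (p - 1)) ≤ 1 := by
  rw [CoefBall, if_neg hp]

lemma coefBall_div_of_sum_rpow_le {p c : ℝ} (hp : p ≠ 1) (hc : 0 < c) {b : ℕ → ℂ}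
    (hb : ∀ s : Finset ℕ, ∑ n ∈ s, ‖b n‖ ^ (p / (p - 1)) ≤ c ^ (p / (p - 1))) :
    CoefBall p fun n => b n / c := by
  rw [coefBall_iff_of_ne_one hp]
  intro s
  calc ∑ n ∈ s, ‖b n / c‖ ^ (p / (p - 1))
      = (∑ n ∈ s, ‖b n‖ ^ (p / (p - 1))) / c ^ (p / (p - 1)) := by
        rw [Finset.sum_div]
        refine Finset.sum_congr rfl fun n _ => ?_
        rw [norm_div, Complex.norm_real, Real.norm_of_nonneg hc.le,
          Real.div_rpow (norm_nonneg _) hc.le]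
    _ ≤ 1 := (div_le_one (Real.rpow_pos_of_pos hc _)).2 (hb s)

lemma Summable.norm_smul_rpow {x : ℕ → E} {p : ℝ} (hx : Summable fun n => ‖x n‖ ^ p) (c : ℂ) :
    Summable fun n => ‖c • x n‖ ^ p := by
  simpa only [norm_smul, Real.mul_rpow (norm_nonneg _) (norm_nonneg _)] using hx.mul_left (‖c‖ ^ p)

lemma relPCompact_of_forall_hasSum {p c : ℝ} (hp : p ≠ 1) (hc : 0 < c) {x : ℕ → E}
    (hx : Summable fun n => ‖x n‖ ^ p) {K : Set E}
    (hK : ∀ v ∈ K, ∃ b : ℕ → ℂ,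
      (∀ s : Finset ℕ, ∑ n ∈ s, ‖b n‖ ^ (p / (p - 1)) ≤ c ^ (p / (p - 1))) ∧
        HasSum (fun n => b n • x n) v) :
    RelPCompact p K := by
  refine ⟨fun n => (c : ℂ) • x n, hx.norm_smul_rpow c, fun v hv => ?_⟩
  obtain ⟨b, hb, hbv⟩ := hK v hv
  have hc' : (c : ℂ) ≠ 0 := by exact_mod_cast hc.ne'
  exact ⟨fun n => b n / c, coefBall_div_of_sum_rpow_le hp hc hb,
    by simpa only [smul_smul, div_mul_cancel₀ _ hc'] using hbv⟩

end

theorem stmt18_general {E F : Type*} [NormedAddCommGroup E] [NormedSpace ℂ E]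
    [NormedAddCommGroup F] [NormedSpace ℂ F]
    {p q : ℝ} (hp : 1 < p) (hq : 1 / p + 1 / q = 1)
    (T : E →L[ℂ] F) (xs : ℕ → StrongDual ℂ E) (y : ℕ → F)
    (hxs : ∃ C : ℝ, ∀ e : E, ‖e‖ ≤ 1 → ∀ s : Finset ℕ, ∑ n ∈ s, ‖xs n e‖ ^ q ≤ C)
    (hy : Summable fun n => ‖y n‖ ^ p)
    (hsum : HasSum (fun n => (xs n).smulRight (y n)) T) :
    RelPCompact p (T '' Metric.closedBall 0 1) := by
  obtain ⟨C, hC⟩ := hxs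
  have hpq : p.HolderConjugate q :=
    Real.holderConjugate_iff.2 ⟨hp, by simpa only [one_div] using hq⟩
  have hc : 0 < max C 1 ^ q⁻¹ := by positivity
  have hcq : (max C 1 ^ q⁻¹) ^ q = max C 1 := by
    rw [← Real.rpow_mul (by positivity), inv_mul_cancel₀ hpq.symm.ne_zero, Real.rpow_one]
  refine relPCompact_of_forall_hasSum hp.ne' hc hy ?_
  rintro _ ⟨e, he, rfl⟩
  refine ⟨fun n => xs n e, fun s => ?_,
    by simpa using hsum.mapL (ContinuousLinearMap.apply ℂ F e)⟩
  rw [← hpq.conjugate_eq, hcq]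
  exact (hC e (mem_closedBall_zero_iff.1 he) s).trans (le_max_left _ _)

/-- If `T = ∑ x_n^* ⊗ y_n` is right `p`-nuclear, with `(x_n^*)` weakly
`p^*`-summable in `E^*` and `(y_n) ∈ ℓ_p(F)`, the series converging in
operator norm, then `T(B_E)` is relatively `p`-compact. -/
theorem stmt18 {E F : Type*} [NormedAddCommGroup E] [NormedSpace ℂ E] [CompleteSpace E]
    [NormedAddCommGroup F] [NormedSpace ℂ F] [CompleteSpace F]
    {p q : ℝ} (hp : 1 < p) (hq : 1 / p + 1 / q = 1)
    (T : E →L[ℂ] F) (xs : ℕ → StrongDual ℂ E) (y : ℕ → F)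
    (hxs : ∃ C : ℝ, ∀ e : E, ‖e‖ ≤ 1 → ∀ s : Finset ℕ, ∑ n ∈ s, ‖xs n e‖ ^ q ≤ C)
    (hy : Summable fun n => ‖y n‖ ^ p)
    (hsum : HasSum (fun n => (xs n).smulRight (y n)) T) :
    RelPCompact p (T '' Metric.closedBall 0 1) :=
  stmt18_general hp hq T xs y hxs hy hsum
end

section
/- Let U be open in a complex Banach space E, v a weight on U, F a complex Banach space, and f ∈ H^∞_v(U,F) a right p-nuclear weighted holomorphic map for p ∈ (1,∞): f = ∑_n g_n·y_n in (H^∞_v(U,F), ‖·‖_v) with (g_n) weakly p*-summable in H^∞_v(U,ℂ) and (y_n) ∈ ℓ_p(F). Then (vf)(U) = {v(x)f(x) : x ∈ U} is a relatively p-compact subset of F. -/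
open scoped BigOperators Classical

/-! At a point `x ∈ U` the weighted evaluation `h ↦ v(x) h(x)` lies in the unit ball of
`H^∞_v(U)^*`, so weak `p*`-summability of `(g_n)` gives `∑ₙ |v(x) gₙ(x)|^{p*} ≤ C` uniformly
in `x`. Hence, with `M = max(C, 1)^{1/p*}`, the point `v(x) f(x) = ∑ₙ (v(x) gₙ(x) / M) • (M yₙ)` lies in
the `p`-convex hull of the single sequence `(M yₙ) ∈ ℓ_p(F)`. -/

open Filter Topology Finset

section

variable {ι 𝕜 F : Type*} [NormedField 𝕜] [NormedAddCommGroup F] [NormedSpace 𝕜 F]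

theorem summable_norm_smul_of_holderConjugate {p q : ℝ} (hpq : p.HolderConjugate q)
    {b : ι → 𝕜} {z : ι → F} (hb : Summable fun n => ‖b n‖ ^ q)
    (hz : Summable fun n => ‖z n‖ ^ p) : Summable fun n => ‖b n • z n‖ := by
  simpa only [norm_smul, mul_comm] using Real.summable_mul_of_Lp_Lq_of_nonneg hpq
    (fun n => norm_nonneg (z n)) (fun n => norm_nonneg (b n)) hz hb

theorem Summable.rpow_norm_smul {p : ℝ} {z : ι → F}
    (hz : Summable fun n => ‖z n‖ ^ p) (c : 𝕜) : Summable fun n => ‖c • z n‖ ^ p := by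
  simpa only [norm_smul, Real.mul_rpow (norm_nonneg c) (norm_nonneg _)] using
    hz.mul_left (‖c‖ ^ p)

end

section

variable {F : Type*} [NormedAddCommGroup F] [NormedSpace ℂ F]

theorem mem_pConv_of_tendsto_sum {p q : ℝ} (hpq : p.HolderConjugate q) {z : ℕ → F}
    (hz : Summable fun n => ‖z n‖ ^ p) {b : ℕ → ℂ} {B : ℝ} (hB : 0 < B)
    (hb : ∀ s : Finset ℕ, ∑ n ∈ s, ‖b n‖ ^ q ≤ B) {w : F}
    (hw : Tendsto (fun n => ∑ k ∈ range n, b k • z k) atTop (𝓝 w)) :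
    w ∈ pConv p fun n => B ^ (1 / q) • z n := by
  set M := B ^ (1 / q)
  have hM : 0 < M := by positivity
  have hMq : M ^ q = B := by
    rw [← Real.rpow_mul hB.le, one_div_mul_cancel hpq.symm.ne_zero, Real.rpow_one]
  refine ⟨fun n => b n / M, ?_, ?_⟩
  · rw [CoefBall, if_neg hpq.lt.ne', ← hpq.conjugate_eq]
    intro s
    calc ∑ n ∈ s, ‖b n / M‖ ^ q = (∑ n ∈ s, ‖b n‖ ^ q) / B := by
          rw [sum_div]
          refine sum_congr rfl fun n _ => ?_
          rw [norm_div, Complex.norm_real, Real.norm_of_nonneg hM.le,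
            Real.div_rpow (norm_nonneg _) hM.le, hMq]
      _ ≤ 1 := (div_le_one hB).2 (hb s)
  · have hterm : ∀ n, (b n / M) • M • z n = b n • z n := fun n => by
      rw [← Complex.coe_smul, smul_smul, div_mul_cancel₀ _ (Complex.ofReal_ne_zero.2 hM.ne')]
    have hbq : Summable fun n => ‖b n‖ ^ q := summable_of_sum_le (fun n => by positivity) hb
    -- `pConv` asks for unconditional convergence; Hölder makes the series absolutely convergent.
    have hbz_norm : Summable fun n => ‖b n • z n‖ :=
      summable_norm_smul_of_holderConjugate hpq hbq hz
    have hbz : HasSum (fun n => b n • z n) w :=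
      (hasSum_iff_tendsto_nat_of_summable_norm hbz_norm).2 hw
    simpa only [hterm] using hbz

theorem relPCompact_of_forall_tendsto_sum {p q : ℝ} (hpq : p.HolderConjugate q) {z : ℕ → F}
    (hz : Summable fun n => ‖z n‖ ^ p) {K : Set F} (C : ℝ)
    (hK : ∀ w ∈ K, ∃ b : ℕ → ℂ, (∀ s : Finset ℕ, ∑ n ∈ s, ‖b n‖ ^ q ≤ C) ∧
      Tendsto (fun n => ∑ k ∈ range n, b k • z k) atTop (𝓝 w)) :
    RelPCompact p K := by
  have hB : 0 < max C 1 := lt_max_of_lt_right one_pos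
  refine ⟨fun n => max C 1 ^ (1 / q) • z n, hz.rpow_norm_smul _, fun w hw => ?_⟩
  obtain ⟨b, hb, hbw⟩ := hK w hw
  exact mem_pConv_of_tendsto_sum hpq hz hB (fun s => (hb s).trans (le_max_left _ _)) hbw

theorem tendsto_smul_of_weighted_uniform {X : Type*} {U : Set X} {v : X → ℝ} {f : X → F}
    {S : ℕ → X → F} (hS : ∀ ε > (0 : ℝ), ∃ N : ℕ, ∀ n ≥ N, ∀ x ∈ U, v x * ‖f x - S n x‖ ≤ ε)
    {x : X} (hx : x ∈ U) (hvx : 0 ≤ v x) :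
    Tendsto (fun n => v x • S n x) atTop (𝓝 (v x • f x)) := by
  rw [Metric.tendsto_atTop]
  intro ε hε
  obtain ⟨N, hN⟩ := hS (ε / 2) (half_pos hε)
  refine ⟨N, fun n hn => ?_⟩
  calc dist (v x • S n x) (v x • f x) = v x * ‖f x - S n x‖ := by
        rw [dist_eq_norm, ← smul_sub, norm_smul, Real.norm_of_nonneg hvx, norm_sub_rev]
    _ ≤ ε / 2 := hN n hn x hx
    _ < ε := half_lt_self hε

end

section

variable {X : Type*}

def weightedEval (v : X → ℝ) (x : X) : (X → ℂ) →ₗ[ℂ] ℂ :=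
  (v x : ℂ) • LinearMap.proj x

theorem weightedEval_apply (v : X → ℝ) (x : X) (h : X → ℂ) :
    weightedEval v x h = v x * h x := rfl

theorem norm_weightedEval_apply {v : X → ℝ} {x : X} (hvx : 0 ≤ v x) (h : X → ℂ) :
    ‖weightedEval v x h‖ = v x * ‖h x‖ := by
  rw [weightedEval_apply, norm_mul, Complex.norm_real, Real.norm_of_nonneg hvx]

end

theorem stmt19_general {E F : Type*} [NormedAddCommGroup E] [NormedSpace ℂ E]
    [NormedAddCommGroup F] [NormedSpace ℂ F]
    (U : Set E) (v : E → ℝ)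
    (hvpos : ∀ x ∈ U, 0 < v x)
    {p q : ℝ} (hp : 1 < p) (hq : 1 / p + 1 / q = 1)
    (f : E → F)
    (g : ℕ → E → ℂ)
    (y : ℕ → F) (hy : Summable fun n => ‖y n‖ ^ p)
    (hweak : ∃ C : ℝ, ∀ φ : (E → ℂ) →ₗ[ℂ] ℂ,
      (∀ h : E → ℂ, DifferentiableOn ℂ h U → (∀ x ∈ U, v x * ‖h x‖ ≤ 1) → ‖φ h‖ ≤ 1) →
      ∀ s : Finset ℕ, ∑ n ∈ s, ‖φ (g n)‖ ^ q ≤ C)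
    (hconv : ∀ ε > (0:ℝ), ∃ N : ℕ, ∀ n ≥ N, ∀ x ∈ U,
      v x * ‖f x - ∑ k ∈ Finset.range n, g k x • y k‖ ≤ ε) :
    RelPCompact p ((fun x => v x • f x) '' U) := by
  obtain ⟨C, hC⟩ := hweak
  have hpq : p.HolderConjugate q :=
    Real.holderConjugate_iff.2 ⟨hp, by simpa only [one_div] using hq⟩
  refine relPCompact_of_forall_tendsto_sum hpq hy C ?_
  rintro _ ⟨x, hx, rfl⟩
  have hvx : 0 ≤ v x := (hvpos x hx).le
  refine ⟨fun n => weightedEval v x (g n), hC _ fun h _ hh => ?_, ?_⟩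
  · exact (norm_weightedEval_apply hvx h).trans_le (hh x hx)
  · have hsum : ∀ n, ∑ k ∈ range n, weightedEval v x (g k) • y k =
        v x • ∑ k ∈ range n, g k x • y k := fun n => by
      simp only [weightedEval_apply, smul_sum, mul_smul, Complex.coe_smul]
    simpa only [hsum] using tendsto_smul_of_weighted_uniform hconv hx hvx

/-- If `f ∈ H^∞_v(U,F)` is right `p`-nuclear, i.e. `f = ∑ g_n · y_n` in the
`v`-norm with `(g_n)` weakly `p^*`-summable in `H^∞_v(U)` (tested against all
linear functionals bounded on the unit ball of `H^∞_v(U)`) and `(y_n) ∈ ℓ_p(F)`,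
then the `v`-range `(vf)(U)` is relatively `p`-compact in `F`. -/
theorem stmt19 {E F : Type*} [NormedAddCommGroup E] [NormedSpace ℂ E]
    [NormedAddCommGroup F] [NormedSpace ℂ F] [CompleteSpace F]
    (U : Set E) (hU : IsOpen U) (v : E → ℝ) (hv : ContinuousOn v U)
    (hvpos : ∀ x ∈ U, 0 < v x)
    {p q : ℝ} (hp : 1 < p) (hq : 1 / p + 1 / q = 1)
    (f : E → F) (hf : DifferentiableOn ℂ f U)
    (g : ℕ → E → ℂ) (hgdiff : ∀ n, DifferentiableOn ℂ (g n) U)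
    (hgbdd : ∀ n, ∃ C : ℝ, ∀ x ∈ U, v x * ‖g n x‖ ≤ C)
    (y : ℕ → F) (hy : Summable fun n => ‖y n‖ ^ p)
    (hweak : ∃ C : ℝ, ∀ φ : (E → ℂ) →ₗ[ℂ] ℂ,
      (∀ h : E → ℂ, DifferentiableOn ℂ h U → (∀ x ∈ U, v x * ‖h x‖ ≤ 1) → ‖φ h‖ ≤ 1) →
      ∀ s : Finset ℕ, ∑ n ∈ s, ‖φ (g n)‖ ^ q ≤ C)
    (hconv : ∀ ε > (0:ℝ), ∃ N : ℕ, ∀ n ≥ N, ∀ x ∈ U,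
      v x * ‖f x - ∑ k ∈ Finset.range n, g k x • y k‖ ≤ ε) :
    RelPCompact p ((fun x => v x • f x) '' U) :=
  stmt19_general U v hvpos hp hq f g y hy hweak hconv
end
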